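/- arXiv:1902.11186 — 3 statements merged into one kernel-verified Lean document; each statement's English description precedes it below -/
import Mathlib

section
/- Let K be an infinite field, G_d : Matrix (Fin p) (Fin m_d) K, and v : Fin m → (Fin p → K) a family of column vectors such that for every j : Fin m the rank of the matrix obtained by appending the column v j to G_d is strictly greater than the rank of G_d. Then there exists a single row vector q : Fin p → K with q ᵥ* G_d = 0 and q ⬝ᵥ v j ≠ 0 for every j : Fin m. -/
/-!
If every left annihilator of `G_d` annihilated `v j`, appending the column `v j` would not change
the left nullspace, hence (by rank–nullity) not the rank. So each functional `q ↦ q ⬝ᵥ v j` on the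
left nullspace of `G_d` is nonzero, and its kernel is a proper subspace. Over an infinite field
finitely many proper subspaces cannot cover the space: any vector outside all of them works.
-/

open Matrix

namespace Matrix

theorem ker_vecMulLinear_fromCols {R m n n' : Type*} [Semiring R] [Fintype m]
    (A : Matrix m n R) (B : Matrix m n' R) :
    LinearMap.ker (fromCols A B).vecMulLinear =
      LinearMap.ker A.vecMulLinear ⊓ LinearMap.ker B.vecMulLinear := by
  ext q
  simp [vecMul_fromCols, funext_iff]

variable {K m n n' : Type*} [Field K] [Fintype m] [Fintype n] [Fintype n']

theorem rank_add_finrank_ker_vecMulLinear (A : Matrix m n K) :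
    A.rank + Module.finrank K (LinearMap.ker A.vecMulLinear) = Fintype.card m := by
  rw [← rank_transpose, rank, mulVecLin_transpose, LinearMap.finrank_range_add_finrank_ker,
    Module.finrank_fintype_fun_eq_card]

theorem rank_eq_of_ker_vecMulLinear_eq {A : Matrix m n K} {B : Matrix m n' K}
    (h : LinearMap.ker A.vecMulLinear = LinearMap.ker B.vecMulLinear) : A.rank = B.rank := by
  have hA := A.rank_add_finrank_ker_vecMulLinear
  have hB := B.rank_add_finrank_ker_vecMulLinear
  rw [h] at hA
  omega

theorem rank_fromCols_eq_left_of_ker_le {A : Matrix m n K} {B : Matrix m n' K}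
    (h : LinearMap.ker A.vecMulLinear ≤ LinearMap.ker B.vecMulLinear) :
    (fromCols A B).rank = A.rank :=
  rank_eq_of_ker_vecMulLinear_eq (by rw [ker_vecMulLinear_fromCols, inf_eq_left.mpr h])

theorem exists_vecMul_eq_zero_dotProduct_ne_zero_of_rank_lt {ι : Type*} [Fintype ι]
    (A : Matrix m n K) (w : m → K) (h : A.rank < (fromCols A (replicateCol ι w)).rank) :
    ∃ q : m → K, q ᵥ* A = 0 ∧ q ⬝ᵥ w ≠ 0 := by
  by_contra! hw
  refine h.ne' (rank_fromCols_eq_left_of_ker_le fun q hq => ?_)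
  ext
  simpa [vecMul, dotProduct] using hw q hq

end Matrix

theorem Module.Dual.exists_forall_apply_ne_zero {K V ι : Type*} [Field K] [Infinite K]
    [AddCommGroup V] [Module K V] [Finite ι] (f : ι → Module.Dual K V) (hf : ∀ i, f i ≠ 0) :
    ∃ x, ∀ i, f i x ≠ 0 := by
  by_contra! hx
  have hcover : ⋃ i, (LinearMap.ker (f i) : Set V) = Set.univ :=
    Set.eq_univ_of_forall fun x => Set.mem_iUnion.mpr (hx x)
  obtain ⟨i, hi⟩ := Subspace.exists_eq_top_of_iUnion_eq_univ hcover
  exact hf i (LinearMap.ker_eq_top.mp hi)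

/-- Over an infinite field, if every column `v j` lies outside the column span of `G_d`
(expressed via a strict rank increase), then a single row vector in the left nullspace of
`G_d` can be chosen that is sensitive to all the vectors `v j` simultaneously. -/
theorem exists_left_annihilator_sensitive_to_all
    (K : Type*) [Field K] [Infinite K] (p m_d m : ℕ)
    (G_d : Matrix (Fin p) (Fin m_d) K) (v : Fin m → (Fin p → K))
    (h : ∀ j : Fin m,
      (Matrix.fromCols G_d (Matrix.replicateCol (Fin 1) (v j))).rank > G_d.rank) :
    ∃ q : Fin p → K, q ᵥ* G_d = 0 ∧ ∀ j : Fin m, q ⬝ᵥ v j ≠ 0 := by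
  let W := LinearMap.ker G_d.vecMulLinear
  let sensitivity (j : Fin m) : Module.Dual K W := (dotProductBilin K K).flip (v j) ∘ₗ W.subtype
  have sensitivity_ne_zero (j : Fin m) : sensitivity j ≠ 0 := fun hj => by
    obtain ⟨q, hq, hqv⟩ := exists_vecMul_eq_zero_dotProduct_ne_zero_of_rank_lt G_d (v j) (h j)
    exact hqv (LinearMap.congr_fun hj ⟨q, hq⟩)
  obtain ⟨⟨q, hq⟩, hqv⟩ := Module.Dual.exists_forall_apply_ne_zero sensitivity sensitivity_ne_zero
  exact ⟨q, hq, hqv⟩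
end

section
/- Let r_d := rank G_d and let N : Matrix (Fin (p - r_d)) (Fin p ⊕ Fin m_u) K satisfy N * G = 0 and rank N = p - r_d (a basis of the left nullspace of G). Then for every j : Fin m_f: the vector N *ᵥ (Sum.elim (fun i => G_f i j) 0) is nonzero if and only if the rank of the matrix obtained by appending the column (fun i => G_f i j) to G_d is strictly greater than rank G_d. (Corollary: the exact fault detection problem is solvable if and only if every column of the fault transfer matrix of the nullspace-reduced system is nonzero.) -/
open Matrix

/-!
Write `N = [N₁ N₂]` according to `Fin p ⊕ Fin m_u`. The equation `N * G = 0` says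
`N₂ = -N₁ G_u` and `N₁ G_d = 0`, so `N = N₁ [1 -G_u]` has the same rank `p - rank G_d`
as `N₁`, and `N *ᵥ (f, 0) = N₁ *ᵥ f`. By rank–nullity, `ker N₁` has dimension `rank G_d`
and contains the column space of `G_d`, hence equals it. So `N *ᵥ (f, 0) ≠ 0` iff `f` lies
outside the column space of `G_d`, which is exactly when appending `f` to `G_d` raises the rank.
-/

namespace Submodule

variable {K V : Type*} [DivisionRing K] [AddCommGroup V] [Module K V] [Module.Finite K V]

theorem finrank_lt_finrank_sup_span_singleton_iff {W : Submodule K V} {v : V} :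
    Module.finrank K W < Module.finrank K (W ⊔ span K {v} : Submodule K V) ↔ v ∉ W := by
  refine ⟨fun h hv => ?_, fun hv => by rw [finrank_sup_span_singleton hv]; omega⟩
  rw [sup_eq_left.2 ((span_singleton_le_iff_mem v W).2 hv)] at h
  exact lt_irrefl _ h

end Submodule

namespace Matrix

section Ring

variable {R : Type*} [Ring R] {l m n k : Type*} [Fintype m] [Fintype n]

theorem mul_fromBlocks_one_zero_eq_zero_iff [DecidableEq n] (N : Matrix l (m ⊕ n) R)
    (A : Matrix m n R) (B : Matrix m k R) :
    N * fromBlocks A B (1 : Matrix n n R) 0 = 0 ↔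
      N.toCols₂ = -(N.toCols₁ * A) ∧ N.toCols₁ * B = 0 := by
  conv_lhs => rw [← fromCols_toCols N, fromCols_mul_fromBlocks, ← fromCols_zero,
    fromCols_ext_iff]
  rw [Matrix.mul_one, Matrix.mul_zero, add_zero, add_eq_zero_iff_eq_neg']

theorem mulVec_sumElim_zero (N : Matrix l (m ⊕ n) R) (v : m → R) :
    N *ᵥ Sum.elim v 0 = N.toCols₁ *ᵥ v := by
  conv_lhs => rw [← fromCols_toCols N]
  rw [fromCols_mulVec_sumElim, mulVec_zero, add_zero]

end Ring

variable {K : Type*} [Field K] {l m n k : Type*}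

theorem rank_le_rank_toCols₁_of_mul_fromBlocks_eq_zero [Fintype m] [Fintype n] [DecidableEq n]
    {N : Matrix l (m ⊕ n) K} {A : Matrix m n K} {B : Matrix m k K}
    (hN : N * fromBlocks A B (1 : Matrix n n K) 0 = 0) :
    N.rank ≤ N.toCols₁.rank := by
  classical
  obtain ⟨hN₂, -⟩ := (mul_fromBlocks_one_zero_eq_zero_iff N A B).1 hN
  calc N.rank = (N.toCols₁ * fromCols 1 (-A)).rank := by
        rw [mul_fromCols, Matrix.mul_one, Matrix.mul_neg, ← hN₂, fromCols_toCols]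
    _ ≤ N.toCols₁.rank := rank_mul_le_left _ _

theorem ker_mulVecLin_eq_range_of_mul_eq_zero [Fintype m] [Fintype k] {N : Matrix l m K}
    {B : Matrix m k K} (hNB : N * B = 0) (hrank : N.rank + B.rank = Fintype.card m) :
    LinearMap.ker N.mulVecLin = LinearMap.range B.mulVecLin := by
  have hle : LinearMap.range B.mulVecLin ≤ LinearMap.ker N.mulVecLin := by
    rintro _ ⟨v, rfl⟩
    rw [LinearMap.mem_ker, mulVecLin_apply, mulVecLin_apply, mulVec_mulVec, hNB, zero_mulVec]
  have hnullity := LinearMap.finrank_range_add_finrank_ker N.mulVecLin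
  rw [Module.finrank_fintype_fun_eq_card] at hnullity
  refine (Submodule.eq_of_le_of_finrank_le hle ?_).symm
  unfold rank at hrank
  omega

theorem range_mulVecLin_fromCols [Fintype n] [Fintype k] (A : Matrix m n K) (B : Matrix m k K) :
    LinearMap.range (fromCols A B).mulVecLin =
      LinearMap.range A.mulVecLin ⊔ LinearMap.range B.mulVecLin := by
  rw [range_mulVecLin, range_mulVecLin, range_mulVecLin, ← Submodule.span_union,
    ← Set.Sum.elim_range]
  congr 2
  ext (j | j) i <;> rfl

theorem range_mulVecLin_replicateCol (ι : Type*) [Fintype ι] [Nonempty ι] (v : m → K) :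
    LinearMap.range (replicateCol ι v).mulVecLin = Submodule.span K {v} := by
  have hcol : (replicateCol ι v).col = fun _ => v := rfl
  rw [range_mulVecLin, hcol, Set.range_const]

theorem rank_lt_rank_fromCols_replicateCol_iff [Fintype m] [Fintype n] (ι : Type*) [Fintype ι]
    [Nonempty ι] (A : Matrix m n K) (v : m → K) :
    A.rank < (fromCols A (replicateCol ι v)).rank ↔ v ∉ LinearMap.range A.mulVecLin := by
  unfold rank
  rw [range_mulVecLin_fromCols, range_mulVecLin_replicateCol,
    Submodule.finrank_lt_finrank_sup_span_singleton_iff]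

end Matrix

/-- Corollary: given a left nullspace basis `N` of `G`, the exact fault detection problem
is solvable if and only if every column of the fault transfer matrix of the
nullspace-reduced system is nonzero. -/
theorem reduced_fault_column_nonzero_iff_rank_increase
    (p m_u m_d m_f : ℕ)
    (G_u : Matrix (Fin p) (Fin m_u) (RatFunc ℝ))
    (G_d : Matrix (Fin p) (Fin m_d) (RatFunc ℝ))
    (G_f : Matrix (Fin p) (Fin m_f) (RatFunc ℝ))
    (N : Matrix (Fin (p - G_d.rank)) (Fin p ⊕ Fin m_u) (RatFunc ℝ))
    (hN : N * (Matrix.fromBlocks G_u G_d 1 0)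
        = (0 : Matrix (Fin (p - G_d.rank)) (Fin m_u ⊕ Fin m_d) (RatFunc ℝ)))
    (hrank : N.rank = p - G_d.rank) :
    ∀ j : Fin m_f,
      (N *ᵥ (Sum.elim (fun i => G_f i j) 0) ≠ 0) ↔
      (Matrix.fromCols G_d (Matrix.replicateCol (Fin 1) (fun i => G_f i j))).rank
        > G_d.rank := by
  intro j
  have hN₁G_d : N.toCols₁ * G_d = 0 := ((mul_fromBlocks_one_zero_eq_zero_iff N G_u G_d).1 hN).2
  have hrank₁ : N.toCols₁.rank = p - G_d.rank := by
    refine le_antisymm (by simpa using N.toCols₁.rank_le_card_height) ?_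
    exact hrank.symm.trans_le (rank_le_rank_toCols₁_of_mul_fromBlocks_eq_zero hN)
  have hker : LinearMap.ker N.toCols₁.mulVecLin = LinearMap.range G_d.mulVecLin := by
    refine ker_mulVecLin_eq_range_of_mul_eq_zero hN₁G_d ?_
    have := G_d.rank_le_card_height
    simp only [Fintype.card_fin] at this ⊢
    omega
  rw [gt_iff_lt, rank_lt_rank_fromCols_replicateCol_iff, ← hker, LinearMap.mem_ker,
    mulVecLin_apply, mulVec_sumElim_zero]
end

section
/- Let S : Fin n_b → Fin m_f → Bool be a structure matrix with no zero columns, i.e., for every j : Fin m_f there exists i : Fin n_b with S i j = true. Then the following are equivalent: (1) there exists a family of row vectors q : Fin n_b → ((Fin p ⊕ Fin m_u) → K) such that for every i, (q i) ᵥ* G = 0, and for every pair (i,j) with S i j = true, (q i) ⬝ᵥ (Sum.elim (fun r => G_f r j) 0) ≠ 0 (the targeted entries of the structure matrix are achieved, with no constraint on the entries with S i j = false); (2) for every j : Fin m_f, the rank of the matrix obtained by appending the column (fun r => G_f r j) to G_d is strictly greater than rank G_d. (Algebraic core of Theorem 5: the soft approximate fault detection and isolation problem is solvable if and only if the exact fault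 detection problem is solvable, i.e., iff the system is completely fault detectable.) -/
/-!
A left annihilator `q` of `fromBlocks G_u G_d 1 0` is determined by its first block `w`, which
must annihilate `G_d`, and its gain on fault `j` is `w ⬝ᵥ g_j` for the fault column `g_j`. By
rank–nullity, appending `g_j` to `G_d` raises the rank iff some left annihilator of `G_d` sees
`g_j`; this gives (1) ⇒ (2) through a row `i` of `S` with `S i j`. Conversely, the left
annihilators of `G_d` blind to a detectable fault form a proper subspace of the left kernel, and
over the infinite field `RatFunc ℝ` finitely many proper subspaces cannot cover it, so a single
`w` sees all the faults targeted by a row of `S` at once.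
-/

open Matrix

theorem Matrix.ker_vecMulLinear_fromCols_s13 {R m n o : Type*} [CommSemiring R] [Fintype m]
    (A : Matrix m n R) (B : Matrix m o R) :
    LinearMap.ker (fromCols A B).vecMulLinear =
      LinearMap.ker A.vecMulLinear ⊓ LinearMap.ker B.vecMulLinear := by
  ext w
  simp [vecMul_fromCols, ← Sum.elim_zero_zero, Sum.elim_eq_iff]

section Field

variable {K m n : Type*} [Field K] [Fintype m]

theorem Matrix.rank_add_finrank_ker_vecMulLinear_s13 [Fintype n] (A : Matrix m n K) :
    A.rank + Module.finrank K (LinearMap.ker A.vecMulLinear) = Fintype.card m := by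
  rw [← rank_transpose, rank, mulVecLin_transpose, LinearMap.finrank_range_add_finrank_ker,
    Module.finrank_fintype_fun_eq_card]

theorem Matrix.rank_lt_rank_fromCols_iff [Fintype n] {o : Type*} [Fintype o] (A : Matrix m n K)
    (B : Matrix m o K) :
    A.rank < (fromCols A B).rank ↔ ∃ w : m → K, w ᵥ* A = 0 ∧ w ᵥ* B ≠ 0 := by
  have hA := A.rank_add_finrank_ker_vecMulLinear_s13
  have hAB := (fromCols A B).rank_add_finrank_ker_vecMulLinear_s13
  rw [ker_vecMulLinear_fromCols_s13] at hAB
  calc A.rank < (fromCols A B).rank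
      ↔ Module.finrank K ↥(LinearMap.ker A.vecMulLinear ⊓ LinearMap.ker B.vecMulLinear) <
          Module.finrank K (LinearMap.ker A.vecMulLinear) := by omega
    _ ↔ ¬LinearMap.ker A.vecMulLinear ≤ LinearMap.ker B.vecMulLinear := by
      rw [← inf_lt_left]
      exact ⟨Submodule.lt_of_le_of_finrank_lt_finrank inf_le_left,
        Submodule.finrank_lt_finrank_of_lt⟩
    _ ↔ ∃ w : m → K, w ᵥ* A = 0 ∧ w ᵥ* B ≠ 0 := by
      simp [SetLike.not_le_iff_exists]

theorem Matrix.rank_lt_rank_fromCols_replicateCol_iff_s13 [Fintype n] {ι : Type*} [Fintype ι]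
    [Nonempty ι] (A : Matrix m n K) (g : m → K) :
    A.rank < (fromCols A (replicateCol ι g)).rank ↔
      ∃ w : m → K, w ᵥ* A = 0 ∧ w ⬝ᵥ g ≠ 0 := by
  simp [rank_lt_rank_fromCols_iff, funext_iff, vecMul, replicateCol]

theorem Matrix.exists_vecMul_eq_zero_forall_dotProduct_ne_zero [Infinite K] {ι : Type*}
    [Finite ι] (A : Matrix m n K) (g : ι → m → K)
    (h : ∀ j, ∃ w : m → K, w ᵥ* A = 0 ∧ w ⬝ᵥ g j ≠ 0) :
    ∃ w : m → K, w ᵥ* A = 0 ∧ ∀ j, w ⬝ᵥ g j ≠ 0 :=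
  Module.Dual.exists_forall_mem_ne_zero_of_forall_exists (LinearMap.ker A.vecMulLinear)
    (fun j => (dotProductBilin K K).flip (g j)) (by simpa using h)

end Field

section Blocks

variable {R l m n : Type*} [Ring R] [Fintype m] [Fintype n]

theorem Matrix.vecMul_fromBlocks_one_zero_eq_zero_iff [DecidableEq n] (A : Matrix m n R)
    (B : Matrix m l R) (q : m ⊕ n → R) :
    q ᵥ* fromBlocks A B 1 0 = 0 ↔
      q ∘ Sum.inr = -(q ∘ Sum.inl ᵥ* A) ∧ q ∘ Sum.inl ᵥ* B = 0 := by
  rw [vecMul_fromBlocks, ← Sum.elim_zero_zero, Sum.elim_eq_iff]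
  simp [add_eq_zero_iff_eq_neg']

theorem Matrix.dotProduct_sumElim_zero (q : m ⊕ n → R) (g : m → R) :
    q ⬝ᵥ Sum.elim g 0 = (q ∘ Sum.inl) ⬝ᵥ g := by
  rw [← Sum.elim_comp_inl_inr q, sumElim_dotProduct_sumElim]
  simp

end Blocks

theorem Matrix.exists_structured_left_annihilators_iff_rank_lt {K m l n ι κ : Type*} [Field K]
    [Infinite K] [Fintype m] [Fintype l] [Fintype n] [DecidableEq l] [Finite ι]
    (A : Matrix m l K) (B : Matrix m n K) (g : ι → m → K) (S : κ → ι → Bool)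
    (hS : ∀ j, ∃ i, S i j = true) :
    (∃ q : κ → (m ⊕ l → K), ∀ i, q i ᵥ* fromBlocks A B 1 0 = 0 ∧
        ∀ j, S i j = true → q i ⬝ᵥ Sum.elim (g j) 0 ≠ 0) ↔
      ∀ j, B.rank < (fromCols B (replicateCol (Fin 1) (g j))).rank := by
  simp only [rank_lt_rank_fromCols_replicateCol_iff_s13, dotProduct_sumElim_zero]
  constructor
  · rintro ⟨q, hq⟩ j
    obtain ⟨i, hij⟩ := hS j
    exact ⟨q i ∘ Sum.inl, ((vecMul_fromBlocks_one_zero_eq_zero_iff A B _).1 (hq i).1).2,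
      (hq i).2 j hij⟩
  · intro h
    have hrow (i : κ) :
        ∃ w : m → K, w ᵥ* B = 0 ∧ ∀ j, S i j = true → w ⬝ᵥ g j ≠ 0 := by
      obtain ⟨w, hw, hwg⟩ := exists_vecMul_eq_zero_forall_dotProduct_ne_zero B
        (fun j : {j // S i j = true} => g j) (fun j => h j)
      exact ⟨w, hw, fun j hj => hwg ⟨j, hj⟩⟩
    choose w hw hwg using hrow
    refine ⟨fun i => Sum.elim (w i) (-(w i ᵥ* A)), fun i => ⟨?_, hwg i⟩⟩
    simp [vecMul_fromBlocks_one_zero_eq_zero_iff, hw]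

/-- Algebraic core of Theorem 5: for a structure matrix `S` without zero columns, the soft
approximate fault detection and isolation problem is solvable if and only if the exact
fault detection problem is solvable (complete fault detectability). -/
theorem soft_afdip_solvable_iff_completely_fault_detectable
    (p m_u m_d m_f n_b : ℕ)
    (G_u : Matrix (Fin p) (Fin m_u) (RatFunc ℝ))
    (G_d : Matrix (Fin p) (Fin m_d) (RatFunc ℝ))
    (G_f : Matrix (Fin p) (Fin m_f) (RatFunc ℝ))
    (S : Fin n_b → Fin m_f → Bool)
    (hS : ∀ j : Fin m_f, ∃ i : Fin n_b, S i j = true) :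
    (∃ q : Fin n_b → ((Fin p ⊕ Fin m_u) → RatFunc ℝ),
        ∀ i : Fin n_b,
          (q i) ᵥ* (Matrix.fromBlocks G_u G_d 1 0) = 0 ∧
          (∀ j : Fin m_f, S i j = true →
            (q i) ⬝ᵥ (Sum.elim (fun r => G_f r j) 0) ≠ 0)) ↔
    (∀ j : Fin m_f,
        (Matrix.fromCols G_d (Matrix.replicateCol (Fin 1) (fun r => G_f r j))).rank
          > G_d.rank) :=
  exists_structured_left_annihilators_iff_rank_lt G_u G_d (fun j r => G_f r j) S hS
end
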